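/- Let (X, μ) be a σ-finite measure space, P = {A_n : n ∈ ℕ} a countable measurable partition of X with 0 < μ(A_n) < ∞ for all n, and G_P f = Σ_n (μ(A_n)⁻¹ ∫_{A_n} f dμ) χ_{A_n}. If S is a semi-doubly stochastic operator on L¹(X,μ), then the composition G_P ∘ S is a semi-doubly stochastic integral operator: there exists a measurable K : X × X → [0,∞) with ∫_X K(x,y) dμ(x) = 1 for a.e. y and ∫_X K(x,y) dμ(y) ≤ 1 for a.e. x, such that for every f ∈ L¹(X,μ), (G_P(Sf))(x) = ∫_X K(x,y) f(y) dμ(y) for almost every x. -/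

import Mathlib

/-!
For a measurable set `E` of finite measure, `f ↦ ∫_E S f` is a continuous functional `φ` on `L¹`
with `0 ≤ φ f ≤ ∫ f` for `f ≥ 0`. The set function `B ↦ φ χ_B` extends, through a disjointed
σ-finite exhaustion, to a measure `ν ≤ μ`, whose Radon–Nikodym density `w` takes values in `[0, 1]`
and represents `φ`: both `φ` and `f ↦ ∫ w f` are continuous and agree on indicators.
The kernel is `K x y = μ(Aₙ)⁻¹ w_{Aₙ}(y)` for `x ∈ Aₙ`. Its `y`-integral is at most
`μ(Aₙ)⁻¹ ν_{Aₙ}(X) ≤ 1` because `∫_{Aₙ} S χ_B ≤ μ(Aₙ)`, and its `x`-integral is `∑ₙ w_{Aₙ}(y)`,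
which is `1` a.e. because `∑ₙ ∫_{Aₙ} S χ_B = ∫ S χ_B = μ(B)`.
-/

open MeasureTheory

/-- `T : L¹(X,μ) → L¹(X,μ)` is a semi-doubly stochastic operator: it is positive,
integral preserving, and `∫_E T χ_B dμ ≤ μ(E)` for all measurable sets `E, B` of finite
measure. -/
def IsSemiDoublyStochastic {X : Type*} [MeasurableSpace X] {μ : Measure X}
    (T : Lp ℝ 1 μ →L[ℝ] Lp ℝ 1 μ) : Prop :=
  (∀ f : Lp ℝ 1 μ, 0 ≤ᵐ[μ] (f : X → ℝ) → 0 ≤ᵐ[μ] (T f : X → ℝ)) ∧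
  (∀ f : Lp ℝ 1 μ, ∫ x, (T f : X → ℝ) x ∂μ = ∫ x, (f : X → ℝ) x ∂μ) ∧
  (∀ E B : Set X, ∀ (_ : MeasurableSet E) (_ : μ E < ⊤) (hB : MeasurableSet B)
    (hBfin : μ B < ⊤),
    ∫ x in E, (T (indicatorConstLp 1 hB hBfin.ne (1 : ℝ)) : X → ℝ) x ∂μ ≤ (μ E).toReal)

open Set Filter Topology
open scoped ENNReal symmDiff

section

variable {X : Type*} [MeasurableSpace X] {μ : Measure X}

open Classical in
noncomputable def indicatorL1 (μ : Measure X) (B : Set X) : Lp ℝ 1 μ :=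
  if h : MeasurableSet B ∧ μ B ≠ ∞ then indicatorConstLp 1 h.1 h.2 1 else 0

theorem indicatorL1_of_measurableSet {B : Set X} (hB : MeasurableSet B) (hBf : μ B ≠ ∞) :
    indicatorL1 μ B = indicatorConstLp 1 hB hBf 1 :=
  dif_pos ⟨hB, hBf⟩

theorem indicatorL1_biUnion_finset {ι : Type*} {C : ι → Set X} (hC : ∀ i, MeasurableSet (C i))
    (hd : Pairwise (Function.onFun Disjoint C)) (hCf : ∀ i, μ (C i) ≠ ∞) (s : Finset ι) :
    indicatorL1 μ (⋃ i ∈ s, C i) = ∑ i ∈ s, indicatorL1 μ (C i) := by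
  classical
  induction s using Finset.induction_on with
  | empty => simp [indicatorL1_of_measurableSet MeasurableSet.empty]
  | insert a s ha ih =>
    have hU : MeasurableSet (⋃ i ∈ s, C i) := s.measurableSet_biUnion fun i _ => hC i
    have hUf : μ (⋃ i ∈ s, C i) ≠ ∞ :=
      (measure_biUnion_lt_top s.finite_toSet fun i _ => (hCf i).lt_top).ne
    have hdisj : Disjoint (C a) (⋃ i ∈ s, C i) :=
      disjoint_iUnion₂_right.2 fun i hi => hd (ne_of_mem_of_not_mem hi ha).symm
    rw [Finset.set_biUnion_insert, Finset.sum_insert ha, ← ih,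
      indicatorL1_of_measurableSet ((hC a).union hU) (measure_union_ne_top (hCf a) hUf),
      indicatorConstLp_disjoint_union (hC a) hU (hCf a) hUf hdisj,
      indicatorL1_of_measurableSet (hC a) (hCf a), indicatorL1_of_measurableSet hU hUf]

theorem hasSum_indicatorL1 {ι : Type*} [Countable ι] {C : ι → Set X}
    (hC : ∀ i, MeasurableSet (C i)) (hd : Pairwise (Function.onFun Disjoint C))
    (hfin : μ (⋃ i, C i) ≠ ∞) :
    HasSum (fun i => indicatorL1 μ (C i)) (indicatorL1 μ (⋃ i, C i)) := by
  have hCf : ∀ i, μ (C i) ≠ ∞ := fun i => measure_ne_top_of_subset (subset_iUnion C i) hfin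
  have hUs : ∀ s : Finset ι, MeasurableSet (⋃ i ∈ s, C i) := fun s =>
    s.measurableSet_biUnion fun i _ => hC i
  have hUsf : ∀ s : Finset ι, μ (⋃ i ∈ s, C i) ≠ ∞ := fun s =>
    (measure_biUnion_lt_top s.finite_toSet fun i _ => (hCf i).lt_top).ne
  have hsub : ∀ s : Finset ι, (⋃ i ∈ s, C i) ⊆ ⋃ i, C i := fun s =>
    iUnion₂_subset fun i _ => subset_iUnion C i
  have hmeas : Tendsto (fun s : Finset ι => μ (⋃ i ∈ s, C i)) atTop (𝓝 (μ (⋃ i, C i))) := by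
    simp_rw [measure_biUnion_finset (fun i _ j _ hij => hd hij) (fun i _ => hC i),
      measure_iUnion hd hC]
    exact ENNReal.summable.hasSum
  have hsymm : Tendsto (fun s : Finset ι => μ ((⋃ i ∈ s, C i) ∆ ⋃ i, C i)) atTop (𝓝 0) := by
    simp_rw [symmDiff_of_le (hsub _), measure_sdiff (hsub _) (hUs _).nullMeasurableSet (hUsf _)]
    simpa using ENNReal.Tendsto.sub tendsto_const_nhds hmeas (Or.inl hfin)
  have hlim := tendsto_indicatorConstLp_set (c := (1 : ℝ)) (hs := MeasurableSet.iUnion hC)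
    (hμs := hfin) (ht := hUs) (hμt := hUsf) ENNReal.one_ne_top hsymm
  rw [indicatorL1_of_measurableSet (MeasurableSet.iUnion hC) hfin]
  refine hlim.congr fun s => ?_
  rw [← indicatorL1_of_measurableSet, indicatorL1_biUnion_finset hC hd hCf]

theorem indicatorL1_coeFn {B : Set X} (hB : MeasurableSet B) (hBf : μ B ≠ ∞) :
    indicatorL1 μ B =ᵐ[μ] B.indicator 1 := by
  rw [indicatorL1_of_measurableSet hB hBf]
  exact indicatorConstLp_coeFn

theorem indicatorL1_nonneg (B : Set X) : 0 ≤ᵐ[μ] indicatorL1 μ B := by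
  by_cases h : MeasurableSet B ∧ μ B ≠ ∞
  · filter_upwards [indicatorL1_coeFn h.1 h.2] with x hx
    rw [hx]
    exact indicator_nonneg (fun _ _ => zero_le_one) x
  · rw [indicatorL1, dif_neg h]
    filter_upwards [Lp.coeFn_zero ℝ 1 μ] with x hx
    rw [hx]

theorem integral_indicatorL1 {B : Set X} (hB : MeasurableSet B) (hBf : μ B ≠ ∞) :
    ∫ x, indicatorL1 μ B x ∂μ = μ.real B := by
  rw [indicatorL1_of_measurableSet hB hBf, integral_indicatorConstLp, smul_eq_mul, mul_one]

section SpanningPieces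

theorem pairwise_disjoint_inter_disjointed {α : Type*} (B : Set α) (F : ℕ → Set α) :
    Pairwise (Function.onFun Disjoint fun k => B ∩ disjointed F k) :=
  fun _ _ hij => (disjoint_disjointed F hij).mono inter_subset_right inter_subset_right

variable [SigmaFinite μ] (B : Set X)

theorem iUnion_inter_disjointed_spanningSets : ⋃ k, B ∩ disjointed (spanningSets μ) k = B := by
  rw [← inter_iUnion, iUnion_disjointed, iUnion_spanningSets, inter_univ]

theorem measure_inter_disjointed_spanningSets_ne_top (k : ℕ) :
    μ (B ∩ disjointed (spanningSets μ) k) ≠ ∞ :=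
  measure_ne_top_of_subset (inter_subset_right.trans (disjointed_subset _ k))
    (measure_spanningSets_lt_top μ k).ne

end SpanningPieces

section FunctionalMeasure

variable (φ : Lp ℝ 1 μ →L[ℝ] ℝ)

theorem tsum_ofReal_apply_indicatorL1 (hφ : ∀ f : Lp ℝ 1 μ, 0 ≤ᵐ[μ] f → 0 ≤ φ f)
    {ι : Type*} [Countable ι] {C : ι → Set X} (hC : ∀ i, MeasurableSet (C i))
    (hd : Pairwise (Function.onFun Disjoint C)) (hfin : μ (⋃ i, C i) ≠ ∞) :
    ∑' i, ENNReal.ofReal (φ (indicatorL1 μ (C i))) =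
      ENNReal.ofReal (φ (indicatorL1 μ (⋃ i, C i))) := by
  have h := (hasSum_indicatorL1 hC hd hfin).mapL φ
  rw [← h.tsum_eq, ENNReal.ofReal_tsum_of_nonneg (fun i => hφ _ (indicatorL1_nonneg _)) h.summable]

variable [SigmaFinite μ]

/-- `B ↦ φ χ_B` only makes sense for `μ B < ∞`, so it is summed over the pieces of `B` cut out by
the disjointed spanning sets of `μ`. -/
noncomputable def functionalMeasure (hφ : ∀ f : Lp ℝ 1 μ, 0 ≤ᵐ[μ] f → 0 ≤ φ f) : Measure X :=
  Measure.ofMeasurable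
    (fun B _ => ∑' k, ENNReal.ofReal (φ (indicatorL1 μ (B ∩ disjointed (spanningSets μ) k))))
    (by simp [indicatorL1_of_measurableSet MeasurableSet.empty])
    (fun B hB hd => by
      rw [ENNReal.tsum_comm]
      refine tsum_congr fun k => ?_
      rw [iUnion_inter, tsum_ofReal_apply_indicatorL1 φ hφ
        (fun i => (hB i).inter (MeasurableSet.disjointed (measurableSet_spanningSets μ) k))
        (fun i j hij => (hd hij).mono inter_subset_left inter_subset_left)]
      rw [← iUnion_inter]
      exact measure_inter_disjointed_spanningSets_ne_top _ k)

variable (hφ : ∀ f : Lp ℝ 1 μ, 0 ≤ᵐ[μ] f → 0 ≤ φ f)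

theorem functionalMeasure_apply {B : Set X} (hB : MeasurableSet B) (hBf : μ B ≠ ∞) :
    functionalMeasure φ hφ B = ENNReal.ofReal (φ (indicatorL1 μ B)) := by
  have h := tsum_ofReal_apply_indicatorL1 φ hφ
    (fun k => hB.inter (MeasurableSet.disjointed (measurableSet_spanningSets μ) k))
    (pairwise_disjoint_inter_disjointed B _) (by rwa [iUnion_inter_disjointed_spanningSets])
  rw [functionalMeasure, Measure.ofMeasurable_apply _ hB]
  rwa [iUnion_inter_disjointed_spanningSets] at h

theorem functionalMeasure_le (hφ' : ∀ f : Lp ℝ 1 μ, 0 ≤ᵐ[μ] f → φ f ≤ ∫ x, f x ∂μ) :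
    functionalMeasure φ hφ ≤ μ := by
  refine Measure.le_iff.2 fun B hB => ?_
  have hC k : MeasurableSet (B ∩ disjointed (spanningSets μ) k) :=
    hB.inter (MeasurableSet.disjointed (measurableSet_spanningSets μ) k)
  rw [functionalMeasure, Measure.ofMeasurable_apply _ hB]
  calc ∑' k, ENNReal.ofReal (φ (indicatorL1 μ (B ∩ disjointed (spanningSets μ) k)))
      ≤ ∑' k, μ (B ∩ disjointed (spanningSets μ) k) :=
        ENNReal.tsum_le_tsum fun k => ENNReal.ofReal_le_of_le_toReal <|
          (hφ' _ (indicatorL1_nonneg _)).trans_eq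
            (integral_indicatorL1 (hC k) (measure_inter_disjointed_spanningSets_ne_top B k))
    _ = μ B := by
        rw [← measure_iUnion (pairwise_disjoint_inter_disjointed B _) hC,
          iUnion_inter_disjointed_spanningSets]

end FunctionalMeasure

theorem indicatorConstLp_eq_smul_one {p : ℝ≥0∞} {B : Set X} (hB : MeasurableSet B)
    (hBf : μ B ≠ ∞) (c : ℝ) :
    indicatorConstLp p hB hBf c = c • indicatorConstLp p hB hBf (1 : ℝ) := by
  ext1
  filter_upwards [indicatorConstLp_coeFn (p := p) (hs := hB) (hμs := hBf) (c := c),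
    Lp.coeFn_smul c (indicatorConstLp p hB hBf (1 : ℝ)),
    indicatorConstLp_coeFn (p := p) (hs := hB) (hμs := hBf) (c := (1 : ℝ))] with y h1 h2 h3
  rw [h1, h2, Pi.smul_apply, h3, ← indicator_const_smul_apply, smul_eq_mul, mul_one]

theorem continuousLinearMap_ext_of_indicatorConstLp {p : ℝ≥0∞} [Fact (1 ≤ p)] (hp : p ≠ ∞)
    {F : Type*} [NormedAddCommGroup F] [NormedSpace ℝ F] {φ ψ : Lp ℝ p μ →L[ℝ] F}
    (h : ∀ B (hB : MeasurableSet B) (hBf : μ B ≠ ∞),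
      φ (indicatorConstLp p hB hBf 1) = ψ (indicatorConstLp p hB hBf 1)) :
    φ = ψ := by
  ext f
  induction f using Lp.induction hp with
  | indicatorConst c hB hBf =>
    rw [Lp.simpleFunc.coe_indicatorConst, indicatorConstLp_eq_smul_one, map_smul, map_smul, h]
  | add _ _ _ hφψf hφψg => rw [map_add, map_add, hφψf, hφψg]
  | isClosed => exact isClosed_eq φ.continuous ψ.continuous

section FunctionalDensity

variable [SigmaFinite μ] (φ : Lp ℝ 1 μ →L[ℝ] ℝ) (hφ : ∀ f : Lp ℝ 1 μ, 0 ≤ᵐ[μ] f → 0 ≤ φ f)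

noncomputable def functionalDensity : X → ℝ≥0∞ :=
  (functionalMeasure φ hφ).rnDeriv μ

theorem measurable_functionalDensity : Measurable (functionalDensity φ hφ) :=
  Measure.measurable_rnDeriv _ _

variable {φ} (hφ' : ∀ f : Lp ℝ 1 μ, 0 ≤ᵐ[μ] f → φ f ≤ ∫ x, f x ∂μ)
include hφ'

theorem functionalDensity_le_one : ∀ᵐ y ∂μ, functionalDensity φ hφ y ≤ 1 :=
  Measure.rnDeriv_le_one_of_le (functionalMeasure_le φ hφ hφ')

theorem setLIntegral_functionalDensity {B : Set X} (hB : MeasurableSet B) (hBf : μ B ≠ ∞) :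
    ∫⁻ y in B, functionalDensity φ hφ y ∂μ = ENNReal.ofReal (φ (indicatorL1 μ B)) := by
  have hle := functionalMeasure_le φ hφ hφ'
  have := Measure.sigmaFinite_of_le μ hle
  rw [functionalDensity,
    Measure.setLIntegral_rnDeriv' (Measure.absolutelyContinuous_of_le hle) hB,
    functionalMeasure_apply φ hφ hB hBf]

theorem apply_eq_integral_functionalDensity_mul (f : Lp ℝ 1 μ) :
    φ f = ∫ y, (functionalDensity φ hφ y).toReal * f y ∂μ := by
  set w := functionalDensity φ hφ
  have hw_le := functionalDensity_le_one hφ hφ'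
  have hw_mem : MemLp (fun y => (w y).toReal) ∞ μ :=
    memLp_top_of_bound (measurable_functionalDensity φ hφ).ennreal_toReal.aestronglyMeasurable 1
      (by
        filter_upwards [hw_le] with y hy
        rw [Real.norm_of_nonneg ENNReal.toReal_nonneg]
        exact ENNReal.toReal_le_of_le_ofReal zero_le_one (by simpa using hy))
  set ψ := (ContinuousLinearMap.mul ℝ ℝ).lpPairing μ ∞ 1 (hw_mem.toLp _)
  have hψ : ∀ g : Lp ℝ 1 μ, ψ g = ∫ y, (w y).toReal * g y ∂μ := fun g => by
    rw [ContinuousLinearMap.lpPairing_eq_integral]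
    exact integral_congr_ae (by filter_upwards [hw_mem.coeFn_toLp] with y hy; simp [hy])
  suffices φ = ψ by rw [this, hψ]
  refine continuousLinearMap_ext_of_indicatorConstLp ENNReal.one_ne_top fun B hB hBf => ?_
  rw [← indicatorL1_of_measurableSet hB hBf]
  calc φ (indicatorL1 μ B)
      = (∫⁻ y in B, w y ∂μ).toReal := by
        rw [setLIntegral_functionalDensity hφ hφ' hB hBf,
          ENNReal.toReal_ofReal (hφ _ (indicatorL1_nonneg B))]
    _ = ∫ y in B, (w y).toReal ∂μ :=
        (integral_toReal (measurable_functionalDensity φ hφ).aemeasurable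
          (ae_restrict_of_ae (hw_le.mono fun y hy => hy.trans_lt ENNReal.one_lt_top))).symm
    _ = ∫ y, (w y).toReal * indicatorL1 μ B y ∂μ := by
        rw [← integral_indicator hB]
        refine integral_congr_ae ?_
        filter_upwards [indicatorL1_coeFn hB hBf] with y hy
        by_cases hyB : y ∈ B <;> simp [hy, hyB]
    _ = ψ (indicatorL1 μ B) := (hψ _).symm

theorem lintegral_functionalDensity_le {c : ℝ≥0∞}
    (hc : ∀ B, MeasurableSet B → μ B ≠ ∞ → ENNReal.ofReal (φ (indicatorL1 μ B)) ≤ c) :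
    ∫⁻ y, functionalDensity φ hφ y ∂μ ≤ c :=
  lintegral_le_of_forall_fin_meas_le c fun B hB hBf =>
    (setLIntegral_functionalDensity hφ hφ' hB hBf).trans_le (hc B hB hBf)

end FunctionalDensity

theorem ae_tsum_functionalDensity_eq_one [SigmaFinite μ] {ι : Type*} [Countable ι]
    {φ : ι → Lp ℝ 1 μ →L[ℝ] ℝ}
    (hφ : ∀ i, ∀ f : Lp ℝ 1 μ, 0 ≤ᵐ[μ] f → 0 ≤ φ i f)
    (hsum : ∀ f : Lp ℝ 1 μ, HasSum (fun i => φ i f) (∫ x, f x ∂μ)) :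
    ∀ᵐ y ∂μ, ∑' i, functionalDensity (φ i) (hφ i) y = 1 := by
  have hφ' (i : ι) (f : Lp ℝ 1 μ) (hf : 0 ≤ᵐ[μ] f) : φ i f ≤ ∫ x, f x ∂μ :=
    le_hasSum (hsum f) i fun j _ => hφ j f hf
  refine ae_eq_of_forall_setLIntegral_eq_of_sigmaFinite
    (Measurable.tsum fun i => measurable_functionalDensity (φ i) (hφ i)) measurable_const
    fun B hB hBf => ?_
  have hχ := hsum (indicatorL1 μ B)
  calc ∫⁻ y in B, ∑' i, functionalDensity (φ i) (hφ i) y ∂μ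
      = ∑' i, ENNReal.ofReal (φ i (indicatorL1 μ B)) := by
        rw [lintegral_tsum fun i => (measurable_functionalDensity (φ i) (hφ i)).aemeasurable]
        exact tsum_congr fun i => setLIntegral_functionalDensity (hφ i) (hφ' i) hB hBf.ne
    _ = μ B := by
        rw [← ENNReal.ofReal_tsum_of_nonneg (fun i => hφ i _ (indicatorL1_nonneg B))
          hχ.summable, hχ.tsum_eq, integral_indicatorL1 hB hBf.ne, ofReal_measureReal hBf.ne]
    _ = ∫⁻ y in B, 1 ∂μ := by simp

noncomputable def setIntegralCLM (μ : Measure X) (E : Set X) : Lp ℝ 1 μ →L[ℝ] ℝ :=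
  L1.integralCLM.comp (LpToLpRestrictCLM X ℝ ℝ μ 1 E)

theorem setIntegralCLM_apply (E : Set X) (f : Lp ℝ 1 μ) :
    setIntegralCLM μ E f = ∫ x in E, f x ∂μ := by
  rw [← integral_congr_ae (LpToLpRestrictCLM_coeFn ℝ E f), ← L1.integral_eq_integral,
    L1.integral_eq, setIntegralCLM, ContinuousLinearMap.comp_apply]

namespace IsSemiDoublyStochastic

variable {S : Lp ℝ 1 μ →L[ℝ] Lp ℝ 1 μ} (hS : IsSemiDoublyStochastic S)
include hS

theorem setIntegralCLM_comp_nonneg (E : Set X) (f : Lp ℝ 1 μ) (hf : 0 ≤ᵐ[μ] f) :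
    0 ≤ (setIntegralCLM μ E).comp S f := by
  rw [ContinuousLinearMap.comp_apply, setIntegralCLM_apply]
  exact integral_nonneg_of_ae (ae_restrict_of_ae (hS.1 f hf))

theorem setIntegralCLM_comp_le_integral (E : Set X) (f : Lp ℝ 1 μ) (hf : 0 ≤ᵐ[μ] f) :
    (setIntegralCLM μ E).comp S f ≤ ∫ x, f x ∂μ := by
  rw [ContinuousLinearMap.comp_apply, setIntegralCLM_apply, ← hS.2.1]
  exact setIntegral_le_integral (L1.integrable_coeFn _) (hS.1 f hf)

theorem hasSum_setIntegralCLM_comp {ι : Type*} [Countable ι] {A : ι → Set X}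
    (hAmeas : ∀ n, MeasurableSet (A n)) (hAdisj : Pairwise (Function.onFun Disjoint A))
    (hAcover : ⋃ n, A n = univ) (f : Lp ℝ 1 μ) :
    HasSum (fun n => (setIntegralCLM μ (A n)).comp S f) (∫ x, f x ∂μ) := by
  have h := hasSum_integral_iUnion hAmeas hAdisj (L1.integrable_coeFn (S f)).integrableOn
  rw [hAcover, Measure.restrict_univ, hS.2.1] at h
  simpa only [ContinuousLinearMap.comp_apply, setIntegralCLM_apply] using h

theorem ofReal_setIntegralCLM_comp_indicatorL1_le {E : Set X} (hE : MeasurableSet E)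
    (hEf : μ E ≠ ∞) {B : Set X} (hB : MeasurableSet B) (hBf : μ B ≠ ∞) :
    ENNReal.ofReal ((setIntegralCLM μ E).comp S (indicatorL1 μ B)) ≤ μ E := by
  rw [ContinuousLinearMap.comp_apply, setIntegralCLM_apply, indicatorL1_of_measurableSet hB hBf]
  exact ENNReal.ofReal_le_of_le_toReal (hS.2.2 E B hE hEf.lt_top hB hBf.lt_top)

end IsSemiDoublyStochastic

theorem tsum_indicator_apply_of_mem {α ι M : Type*} [AddCommMonoid M] [TopologicalSpace M]
    {A : ι → Set α} (hAdisj : Pairwise (Function.onFun Disjoint A)) {x : α} {m : ι}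
    (hx : x ∈ A m) (g : ι → α → M) :
    ∑' n, (A n).indicator (g n) x = g m x := by
  rw [tsum_eq_single m fun n hn =>
    indicator_of_notMem (fun hxn => disjoint_left.1 (hAdisj hn) hxn hx) _, indicator_of_mem hx]

section PartitionKernel

variable {ι : Type*} (μ) (A : ι → Set X) (w : ι → X → ℝ≥0∞)

noncomputable def partitionKernel (x y : X) : ℝ≥0∞ :=
  ∑' n, (A n).indicator (fun _ => (μ (A n))⁻¹ * w n y) x

variable {μ A w}

theorem partitionKernel_of_mem (hAdisj : Pairwise (Function.onFun Disjoint A)) {x : X} {m : ι}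
    (hx : x ∈ A m) (y : X) : partitionKernel μ A w x y = (μ (A m))⁻¹ * w m y :=
  tsum_indicator_apply_of_mem hAdisj hx _

theorem toReal_partitionKernel_of_mem (hAdisj : Pairwise (Function.onFun Disjoint A)) {x : X}
    {m : ι} (hx : x ∈ A m) (y : X) :
    (partitionKernel μ A w x y).toReal = (μ (A m)).toReal⁻¹ * (w m y).toReal := by
  rw [partitionKernel_of_mem hAdisj hx, ENNReal.toReal_mul, ENNReal.toReal_inv]

theorem partitionKernel_ne_top (hAdisj : Pairwise (Function.onFun Disjoint A))
    (hAcover : ⋃ n, A n = univ) (hApos : ∀ n, 0 < μ (A n)) {y : X} (hy : ∀ n, w n y ≠ ∞)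
    (x : X) : partitionKernel μ A w x y ≠ ∞ := by
  obtain ⟨m, hm⟩ := mem_iUnion.1 (hAcover ▸ mem_univ x)
  rw [partitionKernel_of_mem hAdisj hm]
  exact ENNReal.mul_ne_top (ENNReal.inv_ne_top.2 (hApos m).ne') (hy m)

theorem lintegral_partitionKernel_right (hAdisj : Pairwise (Function.onFun Disjoint A))
    (hw : ∀ n, Measurable (w n)) {x : X} {m : ι} (hx : x ∈ A m) :
    ∫⁻ y, partitionKernel μ A w x y ∂μ = (μ (A m))⁻¹ * ∫⁻ y, w m y ∂μ := by
  simp_rw [partitionKernel_of_mem hAdisj hx]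
  exact lintegral_const_mul _ (hw m)

theorem lintegral_ofReal_toReal_partitionKernel_right_le_one
    (hAdisj : Pairwise (Function.onFun Disjoint A)) (hAcover : ⋃ n, A n = univ)
    (hw : ∀ n, Measurable (w n)) (hwA : ∀ n, ∫⁻ y, w n y ∂μ ≤ μ (A n)) (x : X) :
    ∫⁻ y, ENNReal.ofReal (partitionKernel μ A w x y).toReal ∂μ ≤ 1 := by
  obtain ⟨m, hm⟩ := mem_iUnion.1 (hAcover ▸ mem_univ x)
  calc ∫⁻ y, ENNReal.ofReal (partitionKernel μ A w x y).toReal ∂μ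
      ≤ ∫⁻ y, partitionKernel μ A w x y ∂μ := lintegral_mono fun y => ENNReal.ofReal_toReal_le
    _ = (μ (A m))⁻¹ * ∫⁻ y, w m y ∂μ := lintegral_partitionKernel_right hAdisj hw hm
    _ ≤ (μ (A m))⁻¹ * μ (A m) := by gcongr; exact hwA m
    _ ≤ 1 := ENNReal.inv_mul_le_one _

variable [Countable ι]

theorem measurable_partitionKernel (hAmeas : ∀ n, MeasurableSet (A n))
    (hw : ∀ n, Measurable (w n)) :
    Measurable (Function.uncurry (partitionKernel μ A w)) := by
  change Measurable fun p : X × X =>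
    ∑' n, (A n).indicator (fun _ => (μ (A n))⁻¹ * w n p.2) p.1
  refine Measurable.tsum fun n => ?_
  classical
  simp only [indicator_apply]
  exact Measurable.ite ((hAmeas n).preimage measurable_fst)
    (measurable_const.mul ((hw n).comp measurable_snd)) measurable_const

theorem lintegral_partitionKernel_left (hAmeas : ∀ n, MeasurableSet (A n))
    (hApos : ∀ n, 0 < μ (A n)) (hAfin : ∀ n, μ (A n) < ∞) (y : X) :
    ∫⁻ x, partitionKernel μ A w x y ∂μ = ∑' n, w n y := by
  simp only [partitionKernel]
  rw [lintegral_tsum fun n => (measurable_const.indicator (hAmeas n)).aemeasurable]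
  refine tsum_congr fun n => ?_
  rw [lintegral_indicator_const (hAmeas n), mul_comm, ← mul_assoc,
    ENNReal.mul_inv_cancel (hApos n).ne' (hAfin n).ne, one_mul]

theorem lintegral_ofReal_toReal_partitionKernel_left (hAmeas : ∀ n, MeasurableSet (A n))
    (hAdisj : Pairwise (Function.onFun Disjoint A)) (hAcover : ⋃ n, A n = univ)
    (hApos : ∀ n, 0 < μ (A n)) (hAfin : ∀ n, μ (A n) < ∞) {y : X} (hy : ∀ n, w n y ≠ ∞) :
    ∫⁻ x, ENNReal.ofReal (partitionKernel μ A w x y).toReal ∂μ = ∑' n, w n y := by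
  rw [← lintegral_partitionKernel_left hAmeas hApos hAfin y]
  exact lintegral_congr fun x =>
    ENNReal.ofReal_toReal (partitionKernel_ne_top hAdisj hAcover hApos hy x)

end PartitionKernel

end

/-- Let `P = {Aₙ}` be a countable measurable partition of the σ-finite measure space `(X,μ)`
with `0 < μ(Aₙ) < ∞`, and let `G_P f = Σₙ (μ(Aₙ)⁻¹ ∫_{Aₙ} f dμ) χ_{Aₙ}` be the associated
averaging operator.  If `S` is semi-doubly stochastic, then `G_P ∘ S` is a semi-doubly
stochastic integral operator: there is a measurable kernel `K ≥ 0` with `∫ K(x,y) dμ(x) = 1`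
for a.e. `y` and `∫ K(x,y) dμ(y) ≤ 1` for a.e. `x` such that
`(G_P(Sf))(x) = ∫ K(x,y) f(y) dμ(y)` a.e. for every `f ∈ L¹(X,μ)`. -/
theorem averaging_comp_semiDoublyStochastic_is_integral_operator
    {X : Type*} [MeasurableSpace X] (μ : Measure X) [SigmaFinite μ]
    (A : ℕ → Set X) (hAmeas : ∀ n, MeasurableSet (A n))
    (hAdisj : Pairwise (Function.onFun Disjoint A)) (hAcover : ⋃ n, A n = Set.univ)
    (hApos : ∀ n, 0 < μ (A n)) (hAfin : ∀ n, μ (A n) < ⊤)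
    (G : Lp ℝ 1 μ →L[ℝ] Lp ℝ 1 μ)
    (hG : ∀ f : Lp ℝ 1 μ, (G f : X → ℝ) =ᵐ[μ]
      fun x => ∑' n : ℕ,
        Set.indicator (A n) (fun _ => (μ (A n)).toReal⁻¹ * ∫ y in A n, f y ∂μ) x)
    (S : Lp ℝ 1 μ →L[ℝ] Lp ℝ 1 μ) (hS : IsSemiDoublyStochastic S) :
    ∃ K : X → X → ℝ,
      Measurable (Function.uncurry K) ∧ (∀ x y, 0 ≤ K x y) ∧
      (∀ᵐ y ∂μ, ∫⁻ x, ENNReal.ofReal (K x y) ∂μ = 1) ∧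
      (∀ᵐ x ∂μ, ∫⁻ y, ENNReal.ofReal (K x y) ∂μ ≤ 1) ∧
      ∀ f : Lp ℝ 1 μ, (G (S f) : X → ℝ) =ᵐ[μ] fun x => ∫ y, K x y * (f : X → ℝ) y ∂μ := by
  have hφ (n : ℕ) := hS.setIntegralCLM_comp_nonneg (A n)
  have hφ' (n : ℕ) := hS.setIntegralCLM_comp_le_integral (A n)
  set w := fun n => functionalDensity _ (hφ n)
  have hw (n : ℕ) : Measurable (w n) := measurable_functionalDensity _ _
  refine ⟨fun x y => (partitionKernel μ A w x y).toReal,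
    (measurable_partitionKernel hAmeas hw).ennreal_toReal, fun _ _ => ENNReal.toReal_nonneg,
    ?_, .of_forall fun x => ?_, fun f => ?_⟩
  · filter_upwards [ae_tsum_functionalDensity_eq_one hφ
        (hS.hasSum_setIntegralCLM_comp hAmeas hAdisj hAcover),
      ae_all_iff.2 fun n => functionalDensity_le_one (hφ n) (hφ' n)] with y hy_sum hy_le
    rw [lintegral_ofReal_toReal_partitionKernel_left hAmeas hAdisj hAcover hApos hAfin
      fun n => ne_top_of_le_ne_top ENNReal.one_ne_top (hy_le n), hy_sum]
  · exact lintegral_ofReal_toReal_partitionKernel_right_le_one hAdisj hAcover hw (fun n =>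
      lintegral_functionalDensity_le (hφ n) (hφ' n) fun B hB hBf =>
        hS.ofReal_setIntegralCLM_comp_indicatorL1_le (hAmeas n) (hAfin n).ne hB hBf) x
  · filter_upwards [hG (S f)] with x hx
    obtain ⟨m, hm⟩ := mem_iUnion.1 (hAcover ▸ mem_univ x)
    rw [hx, tsum_indicator_apply_of_mem hAdisj hm, ← setIntegralCLM_apply,
      ← ContinuousLinearMap.comp_apply, apply_eq_integral_functionalDensity_mul (hφ m) (hφ' m),
      ← integral_const_mul]
    simp_rw [toReal_partitionKernel_of_mem hAdisj hm, mul_assoc]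
    rfl
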